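/- Let m ≥ 1 be an integer and let G be a nonempty graph in which every nonempty vertex set X with |X| ≤ m satisfies |N_G(X)| > 2|X|. Let P be a path of maximum length in G and let S be the set of all ending vertices for P. Then |S| ≥ m. -/

import Mathlib

open SimpleGraph

/-- `Q` is a rotation of `P`: if `P = p₀ … x … p_t` (with endpoint `b = p_t`) and `x b` is an
edge, the rotation is `p₀ … x b p_{t-1} … `, obtained by reversing the segment after `x` and
appending it after the new edge `x b`.  This is captured by the relation between the vertex
sequences (supports) of the two walks. -/
def IsRotation {V : Type*} {G : SimpleGraph V} {a b c : V}
    (P : G.Walk a b) (Q : G.Walk a c) : Prop :=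
  ∃ (l1 l2 : List V) (x : V),
    P.support = l1 ++ x :: (l2 ++ [b]) ∧ Q.support = l1 ++ x :: b :: l2.reverse

/-- `Q` is derived from `P`: obtained from `P` by a finite sequence of rotations. -/
def IsDerived {V : Type*} {G : SimpleGraph V} {a b c : V}
    (P : G.Walk a b) (Q : G.Walk a c) : Prop :=
  Relation.ReflTransGen (fun R S : (Σ v : V, G.Walk a v) => IsRotation R.2 S.2) ⟨b, P⟩ ⟨c, Q⟩

/-- `x` is an ending vertex for `P`: some path derived from `P` ends at `x`. -/
def IsEndingVertex {V : Type*} {G : SimpleGraph V} {a b : V}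
    (P : G.Walk a b) (x : V) : Prop :=
  ∃ Q : G.Walk a x, IsDerived P Q

/-- `X` is a connected set of ending vertices for `P`: for every `x ∈ X` there is a walk
ending at `x` derived from `P` by a sequence of rotations all of whose intermediate
walks end at vertices of `X`. -/
def IsConnectedEndingSet {V : Type*} {G : SimpleGraph V} {a b : V}
    (P : G.Walk a b) (X : Set V) : Prop :=
  ∀ x ∈ X, ∃ Q : G.Walk a x,
    Relation.ReflTransGen
      (fun R S : (Σ v : V, G.Walk a v) => IsRotation R.2 S.2 ∧ S.1 ∈ X) ⟨b, P⟩ ⟨x, Q⟩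

/-- `N_G(S)`: the set of vertices outside `S` having a neighbour in `S`. -/
def setNbhd {V : Type*} (G : SimpleGraph V) (S : Set V) : Set V :=
  {v | v ∉ S ∧ ∃ s ∈ S, G.Adj v s}

/-! Rotations permute the vertices of a path and delete only an edge at the new end, so every
path derived from `P` is again a longest path on the vertex set of `P`, and every edge of `P`
either survives in it or meets an ending vertex. Let `v ∉ S` be adjacent to the end `x` of a
derived path `Q`. By maximality `v` lies on `Q`, and rotating `Q` at `v` yields an ending vertex
`c` with `vc` an edge of `Q`. If no `P`-neighbour of `v` were in `S`, all `P`-edges at `v` would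
survive in `Q` next to `vc`, so `v` would have more neighbours on `Q` than on `P`; this is
impossible both for an interior vertex of `P` and for the common first vertex. Hence `N(S)` lies
among the at most `2|S|` neighbours of `S` along `P`, and the expansion hypothesis forces
`|S| ≥ m`. -/

namespace SimpleGraph.Walk

variable {V : Type*} {G : SimpleGraph V}

theorem exists_eq_append_of_support_eq {x : V} {m : List V} :
    ∀ {u v : V} {l : List V} (p : G.Walk u v), p.support = l ++ x :: m →
      ∃ (q : G.Walk u x) (r : G.Walk x v), p = q.append r ∧ q.support = l ++ [x] ∧
        r.support = x :: m
  | u, _, [], p, h => by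
    obtain rfl : u = x := (List.cons_eq_cons.mp (p.cons_tail_support.trans h)).1
    exact ⟨nil, p, rfl, rfl, h⟩
  | _, _, y :: l, nil, h => by simp at h
  | _, _, y :: l, cons hadj p, h => by
    obtain ⟨rfl, hp⟩ : _ ∧ p.support = l ++ x :: m := by simpa using h
    obtain ⟨q, r, rfl, hq, hr⟩ := exists_eq_append_of_support_eq p hp
    exact ⟨cons hadj q, r, rfl, by simp [hq], hr⟩

theorem exists_eq_append_cons_of_mem_support {u v x : V} {p : G.Walk u v}
    (hx : x ∈ p.support) (hxv : x ≠ v) :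
    ∃ (c : V) (q : G.Walk u x) (h : G.Adj x c) (r : G.Walk c v), p = q.append (cons h r) := by
  obtain ⟨q, r, rfl⟩ := mem_support_iff_exists_append.mp hx
  cases r with
  | nil => exact absurd rfl hxv
  | cons h r => exact ⟨_, q, h, r, rfl⟩

end SimpleGraph.Walk

namespace SimpleGraph.Walk.IsPath

variable {V : Type*} {G : SimpleGraph V} {u v w y : V}

theorem ncard_neighborSet_toSubgraph_start_le_one {p : G.Walk u v} (hp : p.IsPath) :
    (p.toSubgraph.neighborSet u).ncard ≤ 1 := by
  by_cases hnil : p.Nil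
  · have : p.toSubgraph.neighborSet u = ∅ :=
      Set.eq_empty_of_forall_notMem fun _ hadj ↦ not_nil_of_adj_toSubgraph hadj hnil
    simp [this]
  · simp [hp.neighborSet_toSubgraph_startpoint hnil]

theorem ncard_neighborSet_toSubgraph_le_two {p : G.Walk u v} (hp : p.IsPath) (y : V) :
    (p.toSubgraph.neighborSet y).ncard ≤ 2 := by
  by_cases hy : y ∈ p.support
  · obtain ⟨i, rfl, hi⟩ := mem_support_iff_exists_getVert.mp hy
    rcases Nat.eq_zero_or_pos i with rfl | hi₀
    · simpa using hp.ncard_neighborSet_toSubgraph_start_le_one.trans one_le_two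
    rcases hi.lt_or_eq with hi | rfl
    · exact (hp.ncard_neighborSet_toSubgraph_internal_eq_two hi₀.ne' hi).le
    · have := hp.reverse.ncard_neighborSet_toSubgraph_start_le_one
      rw [toSubgraph_reverse] at this
      simpa using this.trans one_le_two
  · have : p.toSubgraph.neighborSet y = ∅ :=
      Set.eq_empty_of_forall_notMem fun _ hadj ↦ hy (mem_support_of_adj_toSubgraph hadj)
    simp [this]

theorem ncard_neighborSet_toSubgraph_le {p : G.Walk u v} {q : G.Walk u w} (hp : p.IsPath)
    (hq : q.IsPath) (hy : y ∈ p.support) (hyv : y ≠ v) :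
    (q.toSubgraph.neighborSet y).ncard ≤ (p.toSubgraph.neighborSet y).ncard := by
  obtain ⟨i, rfl, hi⟩ := mem_support_iff_exists_getVert.mp hy
  have hi : i < p.length := hi.lt_of_ne (by rintro rfl; simp at hyv)
  rcases Nat.eq_zero_or_pos i with rfl | hi₀
  · rw [getVert_zero, hp.neighborSet_toSubgraph_startpoint (not_nil_iff_lt_length.mpr hi)]
    simpa using hq.ncard_neighborSet_toSubgraph_start_le_one
  · rw [hp.ncard_neighborSet_toSubgraph_internal_eq_two hi₀.ne' hi]
    exact hq.ncard_neighborSet_toSubgraph_le_two _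

theorem ncard_biUnion_neighborSet_toSubgraph_le {p : G.Walk u v} (hp : p.IsPath)
    (S : Finset V) : (⋃ s ∈ S, p.toSubgraph.neighborSet s).ncard ≤ 2 * S.card :=
  (S.set_ncard_biUnion_le _).trans <| by
    simpa [mul_comm] using
      S.sum_le_card_nsmul _ 2 fun s _ ↦ hp.ncard_neighborSet_toSubgraph_le_two s

end SimpleGraph.Walk.IsPath

open SimpleGraph Walk

section Rotation

variable {V : Type*} {G : SimpleGraph V} {a b c : V}

theorem isRotation_append_cons {x : V} (q : G.Walk a x) (hxc : G.Adj x c) (r : G.Walk c b)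
    (hxb : G.Adj x b) : IsRotation (q.append (cons hxc r)) (q.append (cons hxb r.reverse)) := by
  refine ⟨q.support.dropLast, r.support.dropLast, x, ?_, ?_⟩
  · rw [support_append_eq_support_dropLast_append, support_cons, dropLast_support_concat]
  · rw [support_append_eq_support_dropLast_append, support_cons, support_reverse,
      ← dropLast_support_concat r]
    simp

theorem IsRotation.exists_eq_append_cons {Q : G.Walk a b} {Q' : G.Walk a c}
    (h : IsRotation Q Q') : ∃ (x : V) (q : G.Walk a x) (hxc : G.Adj x c) (r : G.Walk c b)
      (hxb : G.Adj x b), Q = q.append (cons hxc r) ∧ Q' = q.append (cons hxb r.reverse) := by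
  obtain ⟨l₁, l₂, x, hQ, hQ'⟩ := h
  obtain ⟨q, _ | ⟨hxz, r⟩, rfl, hq, hzr⟩ := exists_eq_append_of_support_eq Q hQ
  · simp at hzr
  obtain ⟨q', _ | ⟨hxb, r'⟩, rfl, hq', hbr'⟩ := exists_eq_append_of_support_eq Q' hQ'
  · simp at hbr'
  obtain rfl : q = q' := ext_support (hq.trans hq'.symm)
  have hr : r.support = l₂ ++ [b] := by simpa using hzr
  have hr' : r'.support = b :: l₂.reverse := by simpa using hbr'
  obtain rfl := (List.cons_eq_cons.mp (r'.cons_tail_support.trans hr')).1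
  have hrr : r'.support = r.reverse.support := by simp [hr, hr']
  have hends : r'.reverse.support = r.support := by simp [hrr]
  rw [← cons_tail_support r'.reverse, ← cons_tail_support r] at hends
  obtain rfl := (List.cons_eq_cons.mp hends).1
  exact ⟨x, q, hxz, r, hxb, rfl, by rw [ext_support hrr]⟩

theorem IsRotation.support_perm {Q : G.Walk a b} {Q' : G.Walk a c} (h : IsRotation Q Q') :
    Q'.support.Perm Q.support := by
  obtain ⟨l₁, l₂, x, hQ, hQ'⟩ := h
  rw [hQ, hQ']
  exact .append_left l₁ <| .cons x <|
    ((List.reverse_perm l₂).cons b).trans (List.perm_append_singleton b l₂).symm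

theorem IsRotation.mem_edges_or {Q : G.Walk a b} {Q' : G.Walk a c} (h : IsRotation Q Q')
    {e : Sym2 V} (he : e ∈ Q.edges) : e ∈ Q'.edges ∨ c ∈ e := by
  obtain ⟨x, q, hxc, r, hxb, rfl, rfl⟩ := h.exists_eq_append_cons
  simp only [edges_append, edges_cons, edges_reverse, List.mem_append, List.mem_cons,
    List.mem_reverse] at he ⊢
  rcases he with he | rfl | he
  · exact .inl (.inl he)
  · exact .inr (Sym2.mem_mk_right x c)
  · exact .inl (.inr (.inr he))

variable {P : G.Walk a b}

@[elab_as_elim]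
theorem IsDerived.induction_on {motive : ∀ c, G.Walk a c → Prop} {Q : G.Walk a c}
    (h : IsDerived P Q) (refl : motive b P)
    (tail : ∀ (d e : V) (R : G.Walk a d) (R' : G.Walk a e),
      IsDerived P R → IsRotation R R' → motive d R → motive e R') : motive c Q := by
  suffices ∀ R : Σ v, G.Walk a v,
      Relation.ReflTransGen (fun R S : (Σ v : V, G.Walk a v) ↦ IsRotation R.2 S.2) ⟨b, P⟩ R →
      motive R.1 R.2 from this ⟨c, Q⟩ h
  intro R hR
  induction hR with
  | refl => exact refl
  | tail hR hrot ih => exact tail _ _ _ _ hR hrot ih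

theorem IsDerived.support_perm {Q : G.Walk a c} (h : IsDerived P Q) :
    Q.support.Perm P.support :=
  h.induction_on (.refl _) fun _ _ _ _ _ hrot ih ↦ hrot.support_perm.trans ih

theorem IsDerived.isPath {Q : G.Walk a c} (h : IsDerived P Q) (hP : P.IsPath) : Q.IsPath :=
  isPath_def _ |>.mpr <| h.support_perm.nodup_iff.mpr hP.support_nodup

theorem IsDerived.length_eq {Q : G.Walk a c} (h : IsDerived P Q) : Q.length = P.length := by
  simpa using h.support_perm.length_eq

theorem IsDerived.mem_edges_or {Q : G.Walk a c} (h : IsDerived P Q) {e : Sym2 V}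
    (he : e ∈ P.edges) : e ∈ Q.edges ∨ ∃ w ∈ e, IsEndingVertex P w :=
  h.induction_on (.inl he) fun _ _ _ R' hR hrot ih ↦ ih.elim
    (fun he ↦ (hrot.mem_edges_or he).imp_right fun hc ↦ ⟨_, hc, R', hR.tail hrot⟩) .inr

end Rotation

section EndingVertices

variable {V : Type*} {G : SimpleGraph V} {a b : V}

theorem exists_isRotation_of_adj {x v : V} {Q : G.Walk a x} (hv : v ∈ Q.support) (hvx : v ≠ x)
    (hadj : G.Adj v x) : ∃ (c : V) (Q' : G.Walk a c), IsRotation Q Q' ∧ s(v, c) ∈ Q.edges := by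
  obtain ⟨c, q, hvc, r, rfl⟩ := exists_eq_append_cons_of_mem_support hv hvx
  exact ⟨c, _, isRotation_append_cons q hvc r hadj, by simp [edges_append]⟩

theorem exists_isEndingVertex_adj_of_mem_setNbhd {P : G.Walk a b} (hP : P.IsPath)
    (hmax : ∀ (u v : V) (Q : G.Walk u v), Q.IsPath → Q.length ≤ P.length) {v : V}
    (hv : v ∈ setNbhd G {x | IsEndingVertex P x}) :
    ∃ s, IsEndingVertex P s ∧ P.toSubgraph.Adj s v := by
  obtain ⟨hvS, x, ⟨Q, hQ⟩, hvx⟩ := hv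
  by_contra! hno
  have hQpath := hQ.isPath hP
  have hvQ : v ∈ Q.support := by
    by_contra hvQ
    have := hmax _ _ _ (hQpath.concat hvQ hvx.symm)
    simp [hQ.length_eq] at this
  obtain ⟨c, Q', hrot, hvc⟩ := exists_isRotation_of_adj hvQ hvx.ne hvx
  have hsub : P.toSubgraph.neighborSet v ⊂ Q.toSubgraph.neighborSet v := by
    refine (Set.ssubset_iff_of_subset fun w hw ↦ ?_).mpr
      ⟨c, adj_toSubgraph_iff_mem_edges.mpr hvc, fun h ↦ hno c ⟨Q', hQ.tail hrot⟩ h.symm⟩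
    rcases hQ.mem_edges_or (adj_toSubgraph_iff_mem_edges.mp hw) with h | ⟨u, hu, hend⟩
    · exact adj_toSubgraph_iff_mem_edges.mpr h
    · rcases Sym2.mem_iff.mp hu with rfl | rfl
      · exact absurd hend hvS
      · exact absurd hw.symm (hno u hend)
  have hvb : v ≠ b := by
    rintro rfl
    exact hvS ⟨P, .refl⟩
  exact (Set.ncard_lt_ncard hsub (finite_neighborSet_toSubgraph Q)).not_ge
    (hP.ncard_neighborSet_toSubgraph_le hQpath (hQ.support_perm.subset hvQ) hvb)

end EndingVertices

theorem stmt15_general {V : Type*} [Fintype V] (m : ℕ)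
    {G : SimpleGraph V}
    (hexp : ∀ X : Set V, X.Nonempty → X.ncard ≤ m → 2 * X.ncard < (setNbhd G X).ncard)
    {p₀ b : V} (P : G.Walk p₀ b) (hP : P.IsPath)
    (hmax : ∀ (u v : V) (Q : G.Walk u v), Q.IsPath → Q.length ≤ P.length) :
    m ≤ {x : V | IsEndingVertex P x}.ncard := by
  classical
  set S := {x : V | IsEndingVertex P x}
  have hN : setNbhd G S ⊆ ⋃ s ∈ S.toFinset, P.toSubgraph.neighborSet s := fun v hv ↦ by
    obtain ⟨s, hs, hadj⟩ := exists_isEndingVertex_adj_of_mem_setNbhd hP hmax hv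
    exact Set.mem_biUnion (Set.mem_toFinset.mpr hs) hadj
  by_contra! hlt
  have hexpS := hexp S ⟨b, P, .refl⟩ hlt.le
  have hcount :=
    (Set.ncard_le_ncard hN).trans (hP.ncard_biUnion_neighborSet_toSubgraph_le S.toFinset)
  rw [← Set.ncard_eq_toFinset_card'] at hcount
  omega

/-- If in a (nonempty) graph `G` every nonempty vertex set `X` with `|X| ≤ m` satisfies
`|N_G(X)| > 2|X|`, and `P` is a path of maximum length in `G`, then the set `S` of all
ending vertices for `P` has `|S| ≥ m`. -/
theorem stmt15 {V : Type*} [Fintype V] [Nonempty V] (m : ℕ) (hm : 1 ≤ m)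
    {G : SimpleGraph V}
    (hexp : ∀ X : Set V, X.Nonempty → X.ncard ≤ m → 2 * X.ncard < (setNbhd G X).ncard)
    {p₀ b : V} (P : G.Walk p₀ b) (hP : P.IsPath)
    (hmax : ∀ (u v : V) (Q : G.Walk u v), Q.IsPath → Q.length ≤ P.length) :
    m ≤ {x : V | IsEndingVertex P x}.ncard :=
  stmt15_general m hexp P hP hmax
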